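/- arXiv:2206.07862 — 3 statements merged into one kernel-verified Lean document; each statement's English description precedes it below -/
import Mathlib

section
/- Let W = (H, Z) be an ew-system. A model I* of W is optimal (with respect to the recursive argmax definition) if and only if no model of W max-dominates I*; and I* is min-optimal (with respect to the recursive argmin definition) if and only if no model of W min-dominates I*. -/
open scoped Classical

/-- An ew-condition: a set of extended models, an integer weight,
a cost (coefficients) function on evaluations, and a positive integer level. -/
structure EWCond (ι ε : Type*) where
  Mod : Set (ι × ε)
  w : ℤ
  c : ε → ℝ
  lvl : ℕ+

namespace EWCond

variable {ι ε : Type*}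

/-- `I` is a model of the ew-condition `B`. -/
def IsModel (B : EWCond ι ε) (I : ι) : Prop := ∃ ν, (I, ν) ∈ B.Mod

/-- `⟦I ⊨ B⟧`: the weight of `B` if `I` is a model of `B`, and `0` otherwise. -/
noncomputable def costI (B : EWCond ι ε) (I : ι) : ℝ :=
  if B.IsModel I then (B.w : ℝ) else 0

/-- `⟦(I,ν) ⊨ B⟧`: `c(B)(ν)` if `(I,ν)` is an extended model of `B`, and `0` otherwise. -/
noncomputable def costE (B : EWCond ι ε) (p : ι × ε) : ℝ :=
  if p ∈ B.Mod then B.c p.2 else 0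

end EWCond

/-- An ew-system: the extended-model set of its hard theory
together with a finite (multi)set of ew-conditions. -/
structure EWSystem (ι ε : Type*) where
  H : Set (ι × ε)
  Z : Multiset (EWCond ι ε)

namespace EWSystem

variable {ι ε : Type*}

/-- `I` is a model of the ew-system `W`. -/
def IsModel (W : EWSystem ι ε) (I : ι) : Prop := ∃ ν, (I, ν) ∈ W.H

/-- `levels(W)`. -/
noncomputable def levels (W : EWSystem ι ε) : Finset ℕ+ :=
  (W.Z.map EWCond.lvl).toFinset

/-- `Σ_{B ∈ W_l} ⟦I ⊨ B⟧`. -/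
noncomputable def levelCostI (W : EWSystem ι ε) (l : ℕ+) (I : ι) : ℝ :=
  (W.Z.map (fun B => if B.lvl = l then B.costI I else 0)).sum

/-- `Σ_{B ∈ W_l} (⟦I ⊨ B⟧ + ⟦(I,ν) ⊨ B⟧)`. -/
noncomputable def levelCostE (W : EWSystem ι ε) (l : ℕ+) (p : ι × ε) : ℝ :=
  (W.Z.map (fun B => if B.lvl = l then B.costI p.1 + B.costE p else 0)).sum

/-- Elements of `S` at which `f` is `r`-extremal: for `r = (· ≤ ·)` these are
the maximizers of `f` on `S`; for `r = (fun a b => b ≤ a)`, the minimizers. -/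
def argOn {α : Type*} (r : ℝ → ℝ → Prop) (f : α → ℝ) (S : Set α) : Set α :=
  {x ∈ S | ∀ y ∈ S, r (f y) (f x)}

/-- Instantiating `r := maxR` yields the argmax-based (optimal) notions. -/
def maxR : ℝ → ℝ → Prop := fun a b => a ≤ b

/-- Instantiating `r := minR` yields the argmin-based (min-optimal) notions. -/
def minR : ℝ → ℝ → Prop := fun a b => b ≤ a

/-- The levels of `W` strictly greater than `l`, in ascending order. -/
noncomputable def levelsAbove (W : EWSystem ι ε) (l : ℕ+) : List ℕ+ :=
  (W.levels.filter (fun l' => l < l')).sort (· ≤ ·)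

/-- Processing an ascending list `a₁ < a₂ < ⋯ < aₖ` of levels:
`argOn r f_{a₁} (argOn r f_{a₂} (⋯ (argOn r f_{aₖ} (models of W))))`.
Hence `W.chainI r (W.levelsAbove l)` is the set over which the `l`-optimization
ranges: all models of `W` when `l` is the greatest level, and the
`succ(l)`-optimal models otherwise. -/
noncomputable def chainI (W : EWSystem ι ε) (r : ℝ → ℝ → Prop) : List ℕ+ → Set ι
  | [] => {I | W.IsModel I}
  | a :: rest => argOn r (W.levelCostI a) (W.chainI r rest)

/-- `I` is an `l`-optimal (for `r = maxR`; `l`-min-optimal for `r = minR`) model of `W`. -/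
def LOptI (W : EWSystem ι ε) (r : ℝ → ℝ → Prop) (l : ℕ+) (I : ι) : Prop :=
  I ∈ argOn r (W.levelCostI l) (W.chainI r (W.levelsAbove l))

/-- `I` is an optimal (for `r = maxR`; min-optimal for `r = minR`) model of `W`:
a model of `W` that is `l`-optimal for every level `l ∈ levels(W)`. -/
def OptimalI (W : EWSystem ι ε) (r : ℝ → ℝ → Prop) (I : ι) : Prop :=
  W.IsModel I ∧ ∀ l ∈ W.levels, W.LOptI r l I

/-- The extended-model analogue of `chainI`. -/
noncomputable def chainE (W : EWSystem ι ε) (r : ℝ → ℝ → Prop) : List ℕ+ → Set (ι × ε)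
  | [] => W.H
  | a :: rest => argOn r (W.levelCostE a) (W.chainE r rest)

/-- `(I,ν)` is an `l`-optimal (resp. `l`-min-optimal) extended model of `W`. -/
def LOptE (W : EWSystem ι ε) (r : ℝ → ℝ → Prop) (l : ℕ+) (p : ι × ε) : Prop :=
  p ∈ argOn r (W.levelCostE l) (W.chainE r (W.levelsAbove l))

/-- `(I,ν)` is an optimal (resp. min-optimal) extended model of `W`. -/
def OptimalE (W : EWSystem ι ε) (r : ℝ → ℝ → Prop) (p : ι × ε) : Prop :=
  p ∈ W.H ∧ ∀ l ∈ W.levels, W.LOptE r l p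

end EWSystem

variable {ι ε : Type*}

/-- `I'` max-dominates `I`: for some level `l ∈ levels(W)`, the level sums agree
at every level greater than `l` and the level-`l` sum of `I'` is strictly greater. -/
def MaxDominatesI (W : EWSystem ι ε) (I' I : ι) : Prop :=
  ∃ l ∈ W.levels,
    (∀ l' : ℕ+, l < l' → W.levelCostI l' I = W.levelCostI l' I') ∧
    W.levelCostI l I < W.levelCostI l I'

/-- `I'` min-dominates `I`. -/
def MinDominatesI (W : EWSystem ι ε) (I' I : ι) : Prop :=
  ∃ l ∈ W.levels,
    (∀ l' : ℕ+, l < l' → W.levelCostI l' I = W.levelCostI l' I') ∧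
    W.levelCostI l I' < W.levelCostI l I

/-! The models surviving the iterated optimization of the levels above `l` are exactly the
models agreeing on those levels with any one survivor. Hence, by induction along the ascending
list of levels, a model survives every stage iff each model agreeing with it on all levels above
some level `c` does no better at `c`, which is non-domination. The comparison only has to be
antisymmetric, so maximization and minimization are one argument. -/

namespace EWSystem

instance : Std.Antisymm maxR := ⟨fun _ _ => le_antisymm⟩

instance : Std.Antisymm minR := ⟨fun _ _ h₁ h₂ => le_antisymm h₂ h₁⟩

variable (W : EWSystem ι ε) {r : ℝ → ℝ → Prop}

lemma chainI_subset : ∀ s : List ℕ+, W.chainI r s ⊆ {I | W.IsModel I}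
  | [] => subset_rfl
  | _ :: t => fun _ hx => chainI_subset t hx.1

lemma levelCostI_eq_of_mem_chainI [Std.Antisymm r] :
    ∀ {s : List ℕ+} {x y : ι}, x ∈ W.chainI r s → y ∈ W.chainI r s →
      ∀ a ∈ s, W.levelCostI a x = W.levelCostI a y
  | _ :: t, _, _, ⟨hxt, hxmax⟩, ⟨hyt, hymax⟩, c, hc => by
    rcases List.mem_cons.mp hc with rfl | hct
    · exact Std.Antisymm.antisymm _ _ (hymax _ hxt) (hxmax _ hyt)
    · exact levelCostI_eq_of_mem_chainI hxt hyt c hct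

lemma mem_chainI_of_agree : ∀ {s : List ℕ+} {x y : ι}, x ∈ W.chainI r s → W.IsModel y →
    (∀ a ∈ s, W.levelCostI a x = W.levelCostI a y) → y ∈ W.chainI r s
  | [], _, _, _, hy, _ => hy
  | a :: _, _, _, ⟨hxt, hxmax⟩, hy, hagree =>
    ⟨mem_chainI_of_agree hxt hy fun b hb => hagree b (List.mem_cons_of_mem a hb),
      fun z hz => hagree a List.mem_cons_self ▸ hxmax z hz⟩

lemma mem_chainI_iff [Std.Antisymm r] {x : ι} :
    ∀ {s : List ℕ+}, s.Pairwise (· < ·) →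
      (x ∈ W.chainI r s ↔ W.IsModel x ∧ ∀ y, W.IsModel y → ∀ c ∈ s,
        (∀ b ∈ s, c < b → W.levelCostI b x = W.levelCostI b y) →
          r (W.levelCostI c y) (W.levelCostI c x))
  | [], _ => by simp [chainI]
  | a :: t, hs => by
    obtain ⟨ha, ht⟩ := List.pairwise_cons.mp hs
    have ih := mem_chainI_iff (x := x) ht
    constructor
    · rintro ⟨hxt, hxmax⟩
      obtain ⟨hx, hdom⟩ := ih.mp hxt
      refine ⟨hx, fun y hy c hc hagree => ?_⟩
      rcases List.mem_cons.mp hc with rfl | hct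
      · exact hxmax y (W.mem_chainI_of_agree hxt hy fun b hb =>
          hagree b (List.mem_cons_of_mem _ hb) (ha b hb))
      · exact hdom y hy c hct fun b hb hcb => hagree b (List.mem_cons_of_mem a hb) hcb
    · rintro ⟨hx, hdom⟩
      have hxt : x ∈ W.chainI r t := ih.mpr ⟨hx, fun y hy c hct hagree =>
        hdom y hy c (List.mem_cons_of_mem a hct) fun b hb hcb => by
          rcases List.mem_cons.mp hb with rfl | hbt
          · exact absurd (ha c hct) (lt_asymm hcb)
          · exact hagree b hbt hcb⟩
      refine ⟨hxt, fun y hyt => hdom y (W.chainI_subset t hyt) a List.mem_cons_self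
        fun b hb hab => ?_⟩
      rcases List.mem_cons.mp hb with rfl | hbt
      · exact absurd hab (lt_irrefl _)
      · exact W.levelCostI_eq_of_mem_chainI hxt hyt b hbt

lemma levelCostI_eq_zero {l : ℕ+} (hl : l ∉ W.levels) (I : ι) : W.levelCostI l I = 0 :=
  Multiset.sum_eq_zero fun _ hz => by
    obtain ⟨B, hB, rfl⟩ := Multiset.mem_map.mp hz
    exact if_neg fun (h : B.lvl = l) =>
      hl (Multiset.mem_toFinset.mpr (h ▸ Multiset.mem_map_of_mem _ hB))

lemma mem_levelsAbove {l b : ℕ+} : b ∈ W.levelsAbove l ↔ b ∈ W.levels ∧ l < b := by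
  rw [levelsAbove, Finset.mem_sort, Finset.mem_filter]

lemma pairwise_cons_levelsAbove (l : ℕ+) : (l :: W.levelsAbove l).Pairwise (· < ·) :=
  List.pairwise_cons.mpr ⟨fun _ hb => ((W.mem_levelsAbove).mp hb).2,
    (Finset.sortedLT_sort _).pairwise⟩

lemma lOptI_iff [Std.Antisymm r] {l : ℕ+} (hl : l ∈ W.levels) {x : ι} :
    W.LOptI r l x ↔ W.IsModel x ∧ ∀ y, W.IsModel y → ∀ c ∈ W.levels, l ≤ c →
      (∀ l', c < l' → W.levelCostI l' x = W.levelCostI l' y) →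
        r (W.levelCostI c y) (W.levelCostI c x) := by
  have hmem : ∀ {c}, c ∈ l :: W.levelsAbove l ↔ c ∈ W.levels ∧ l ≤ c := by
    intro c
    rw [List.mem_cons, mem_levelsAbove, le_iff_eq_or_lt]
    constructor
    · rintro (rfl | ⟨hc, hlc⟩)
      exacts [⟨hl, .inl rfl⟩, ⟨hc, .inr hlc⟩]
    · rintro ⟨hc, rfl | hlc⟩
      exacts [.inl rfl, .inr ⟨hc, hlc⟩]
  show x ∈ W.chainI r (l :: W.levelsAbove l) ↔ _
  rw [W.mem_chainI_iff (W.pairwise_cons_levelsAbove l)]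
  refine and_congr_right fun _ => forall₂_congr fun y _ => ⟨?_, ?_⟩
  · intro h c hc hlc hagree
    exact h c (hmem.mpr ⟨hc, hlc⟩) fun b _ hcb => hagree b hcb
  · intro h c hc hagree
    obtain ⟨hcL, hlc⟩ := hmem.mp hc
    refine h c hcL hlc fun l' hcl' => ?_
    by_cases hl' : l' ∈ W.levels
    · exact hagree l' (hmem.mpr ⟨hl', hlc.trans hcl'.le⟩) hcl'
    · rw [W.levelCostI_eq_zero hl', W.levelCostI_eq_zero hl']

lemma optimalI_iff [Std.Antisymm r] {x : ι} :
    W.OptimalI r x ↔ W.IsModel x ∧ ∀ y, W.IsModel y → ∀ c ∈ W.levels,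
      (∀ l', c < l' → W.levelCostI l' x = W.levelCostI l' y) →
        r (W.levelCostI c y) (W.levelCostI c x) := by
  constructor
  · rintro ⟨hx, hopt⟩
    exact ⟨hx, fun y hy c hc => ((W.lOptI_iff hc).mp (hopt c hc)).2 y hy c hc le_rfl⟩
  · rintro ⟨hx, hdom⟩
    exact ⟨hx, fun l hl => (W.lOptI_iff hl).mpr ⟨hx, fun y hy c hc _ => hdom y hy c hc⟩⟩

end EWSystem

/-- a model `I*` of `W` is optimal iff no model of `W` max-dominates it,
and min-optimal iff no model of `W` min-dominates it. -/
theorem stmt0 (W : EWSystem ι ε) (Istar : ι) (hIstar : W.IsModel Istar) :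
    (W.OptimalI EWSystem.maxR Istar ↔
      ¬ ∃ I' : ι, W.IsModel I' ∧ MaxDominatesI W I' Istar) ∧
    (W.OptimalI EWSystem.minR Istar ↔
      ¬ ∃ I' : ι, W.IsModel I' ∧ MinDominatesI W I' Istar) := by
  simp only [EWSystem.optimalI_iff, MaxDominatesI, MinDominatesI, EWSystem.maxR,
    EWSystem.minR, hIstar, true_and, not_exists, not_and, not_lt]
end

section
/- Let S be a finite family of pairs (Mod_F, w_F), where each Mod_F ⊆ ι × ε and each w_F is a positive integer; write I ⊨ F when (I,ν) ∈ Mod_F for some ν ∈ ε. Let W be the ew-system whose hard theory has extended-model set ι × ε (every extended interpretation is an extended model) and whose ew-conditions are exactly the conditions (Mod_F, w_F, zero cost function, level 1) for (Mod_F, w_F) ∈ S. Then an interpretation I* ∈ ι is an optimal model of W if and only if I* is a solution of the weighted MaxSMT problem S, i.e., Σ_{(F,w_F) ∈ S} w_F·[I* ⊨ F] ≥ Σ_{(F,w_F) ∈ S} w_F·[I ⊨ F] for every interpretation I ∈ ι (where [I ⊨ F] is 1 if I ⊨ F and 0 otherwise). -/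
open scoped Classical

namespace EWSystem

variable {ι ε : Type*}

theorem levelsAbove_eq_nil {W : EWSystem ι ε} {l : ℕ+} (hl : ∀ l' ∈ W.levels, l' ≤ l) :
    W.levelsAbove l = [] := by
  have hempty : W.levels.filter (fun l' => l < l') = ∅ :=
    Finset.filter_eq_empty_iff.mpr fun l' hl' => not_lt.mpr (hl l' hl')
  simp [levelsAbove, hempty]

theorem levelCostI_eq_zero_of_notMem {W : EWSystem ι ε} {l : ℕ+} (hl : l ∉ W.levels) (I : ι) :
    W.levelCostI l I = 0 := by
  refine Multiset.sum_eq_zero fun x hx => ?_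
  obtain ⟨B, hB, rfl⟩ := Multiset.mem_map.mp hx
  have hBl : B.lvl ≠ l := fun h =>
    hl (Multiset.mem_toFinset.mpr (Multiset.mem_map.mpr ⟨B, hB, h⟩))
  simp [hBl]

theorem optimalI_iff_of_forall_lvl_eq {W : EWSystem ι ε} {r : ℝ → ℝ → Prop}
    (hr : ∀ a, r a a) {l : ℕ+} (hZ : ∀ B ∈ W.Z, B.lvl = l) (I : ι) :
    W.OptimalI r I ↔ I ∈ argOn r (W.levelCostI l) {J | W.IsModel J} := by
  have hlevels : ∀ l' ∈ W.levels, l' = l := fun l' hl' => by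
    obtain ⟨B, hB, rfl⟩ := Multiset.mem_map.mp (Multiset.mem_toFinset.mp hl')
    exact hZ B hB
  by_cases hl : l ∈ W.levels
  · have hLOpt : W.LOptI r l I ↔ I ∈ argOn r (W.levelCostI l) {J | W.IsModel J} := by
      rw [LOptI, levelsAbove_eq_nil fun l' hl' => (hlevels l' hl').le, chainI]
    constructor
    · rintro ⟨-, hopt⟩
      exact hLOpt.mp (hopt l hl)
    · intro hI
      refine ⟨hI.1, fun l' hl' => ?_⟩
      rw [hlevels l' hl']
      exact hLOpt.mpr hI
  · have hnil : W.levels = ∅ :=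
      Finset.eq_empty_of_forall_notMem fun l' hl' => hl (hlevels l' hl' ▸ hl')
    simp [OptimalI, argOn, hnil, levelCostI_eq_zero_of_notMem hl, hr]

def ofMaxSMT (S : Finset (Set (ι × ε) × ℤ)) : EWSystem ι ε :=
  ⟨Set.univ, S.val.map (fun p => ⟨p.1, p.2, fun _ => (0 : ℝ), 1⟩)⟩

theorem ofMaxSMT_lvl (S : Finset (Set (ι × ε) × ℤ)) : ∀ B ∈ (ofMaxSMT S).Z, B.lvl = 1 := by
  rintro B hB
  obtain ⟨p, -, rfl⟩ := Multiset.mem_map.mp hB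
  rfl

theorem ofMaxSMT_isModel [Nonempty ε] (S : Finset (Set (ι × ε) × ℤ)) (I : ι) :
    (ofMaxSMT S).IsModel I :=
  ⟨Classical.arbitrary ε, Set.mem_univ _⟩

theorem ofMaxSMT_levelCostI_one (S : Finset (Set (ι × ε) × ℤ)) (I : ι) :
    (ofMaxSMT S).levelCostI 1 I = ∑ p ∈ S, (p.2 : ℝ) * (if ∃ ν, (I, ν) ∈ p.1 then 1 else 0) := by
  simp only [levelCostI, ofMaxSMT, Multiset.map_map, Finset.sum]
  congr 1
  refine Multiset.map_congr rfl fun p _ => ?_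
  simp only [EWCond.costI, EWCond.IsModel, mul_ite, mul_one, mul_zero]
  -- the two sides decide `∃ ν, _` with different instances
  exact if_congr Iff.rfl rfl rfl

end EWSystem

theorem stmt2_general {ι ε : Type*} [Nonempty ε] (S : Finset (Set (ι × ε) × ℤ))
    (Istar : ι) :
    EWSystem.OptimalI
      (⟨Set.univ, S.val.map (fun p => ⟨p.1, p.2, fun _ => (0 : ℝ), 1⟩)⟩ : EWSystem ι ε)
      EWSystem.maxR Istar ↔
    ∀ I : ι,
      (∑ p ∈ S, (p.2 : ℝ) * (if ∃ ν, (I, ν) ∈ p.1 then 1 else 0)) ≤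
      (∑ p ∈ S, (p.2 : ℝ) * (if ∃ ν, (Istar, ν) ∈ p.1 then 1 else 0)) := by
  change (EWSystem.ofMaxSMT S).OptimalI EWSystem.maxR Istar ↔ _
  rw [EWSystem.optimalI_iff_of_forall_lvl_eq (r := EWSystem.maxR) le_refl
    (EWSystem.ofMaxSMT_lvl S)]
  simp only [EWSystem.argOn, EWSystem.maxR, EWSystem.ofMaxSMT_levelCostI_one,
    EWSystem.ofMaxSMT_isModel, Set.mem_ofPred_eq, true_and, forall_const]

/-- `I*` is an optimal model of the ew-system whose hard theory has all of
`ι × ε` as extended models and whose ew-conditions are `(Mod_F, w_F, 0, 1)` for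
`(Mod_F, w_F) ∈ S`, iff `I*` is a solution of the weighted MaxSMT problem `S`. -/
theorem stmt2 {ι ε : Type*} [Nonempty ε] (S : Finset (Set (ι × ε) × ℤ))
    (hpos : ∀ p ∈ S, 0 < p.2) (Istar : ι) :
    EWSystem.OptimalI
      (⟨Set.univ, S.val.map (fun p => ⟨p.1, p.2, fun _ => (0 : ℝ), 1⟩)⟩ : EWSystem ι ε)
      EWSystem.maxR Istar ↔
    ∀ I : ι,
      (∑ p ∈ S, (p.2 : ℝ) * (if ∃ ν, (I, ν) ∈ p.1 then 1 else 0)) ≤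
      (∑ p ∈ S, (p.2 : ℝ) * (if ∃ ν, (Istar, ν) ∈ p.1 then 1 else 0)) :=
  stmt2_general S Istar
end

section
/- Let W = (H, Z) be an ew-system and let S ⊆ Z be a set of ew-conditions all sharing the same level l. Suppose that for any two models I and I' of W that are succ(l)-optimal (resp. succ(l)-min-optimal) — or for any two models of W, in case succ(l) is undefined, i.e., l is the greatest level of W — the equality Σ_{B ∈ S} ⟦I⊨B⟧ = Σ_{B ∈ S} ⟦I'⊨B⟧ holds. Then W and the ew-system (H, Z \ S) have the same optimal (resp. min-optimal) models. -/
open scoped Classical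

/-!
Optimal models are exactly the members of the nested chain obtained by optimizing level by level,
from the highest level down; a level carrying no condition has zero objective and leaves the chain
unchanged. Removing `S` changes only the level-`l` objective, by the summand `Σ_{B ∈ S} ⟦I ⊨ B⟧`.
By hypothesis that summand is constant on the set over which level `l` is optimized, so the
level-`l` optima, and with them every later stage of the chain, stay the same.
-/

lemma Finset.filter_lt_insert_of_le {α : Type*} [LinearOrder α] {a b : α} {s : Finset α}
    (h : a ≤ b) : (insert a s).filter (b < ·) = s.filter (b < ·) := by
  rw [Finset.filter_insert, if_neg h.not_gt]

lemma Finset.filter_lt_insert_of_forall_lt {α : Type*} [LinearOrder α] {a : α} {s : Finset α}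
    (h : ∀ x ∈ s, a < x) : (insert a s).filter (a < ·) = s := by
  rw [Finset.filter_lt_insert_of_le le_rfl, Finset.filter_true_of_mem h]

namespace EWSystem

variable {ι ε : Type*}

section argOn

variable {α : Type*} {r : ℝ → ℝ → Prop} {f : α → ℝ} {X : Set α}

lemma argOn_subset : argOn r f X ⊆ X := fun _ hx => hx.1

lemma argOn_const (hr : ∀ a, r a a) (c : ℝ) : argOn r (fun _ => c) X = X :=
  Set.Subset.antisymm argOn_subset fun _ hx => ⟨hx, fun _ _ => hr c⟩

lemma argOn_add_of_const (hr : ∀ a b c, r (a + c) (b + c) ↔ r a b) {g : α → ℝ}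
    (hg : ∀ x ∈ X, ∀ y ∈ X, g x = g y) : argOn r (fun x => f x + g x) X = argOn r f X := by
  ext x
  refine and_congr_right fun hx => forall₂_congr fun y hy => ?_
  show r (f y + g y) (f x + g x) ↔ _
  rw [hg y hy x hx]
  exact hr _ _ _

end argOn

lemma levelCostI_eq_zero_of_notMem_levels {W : EWSystem ι ε} {a : ℕ+} (ha : a ∉ W.levels) :
    W.levelCostI a = 0 := by
  funext I
  refine Multiset.sum_eq_zero fun x hx => ?_
  obtain ⟨B, hB, rfl⟩ := Multiset.mem_map.mp hx
  exact if_neg fun h => ha (Multiset.mem_toFinset.mpr (Multiset.mem_map.mpr ⟨B, hB, h⟩))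

lemma mem_chainI_sort_iff (W : EWSystem ι ε) (r : ℝ → ℝ → Prop) (G : Finset ℕ+) (I : ι) :
    I ∈ W.chainI r (G.sort (· ≤ ·)) ↔ W.IsModel I ∧
      ∀ a ∈ G, I ∈ argOn r (W.levelCostI a) (W.chainI r ((G.filter (a < ·)).sort (· ≤ ·))) := by
  induction G using Finset.induction_on_min with
  | empty => simp [chainI]
  | insert a s has ih =>
    rw [Finset.sort_insert _ (fun b hb => (has b hb).le) fun h => lt_irrefl a (has a h),
      Finset.forall_mem_insert, Finset.filter_lt_insert_of_forall_lt has]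
    refine ⟨fun hI => ?_, fun ⟨_, hI, _⟩ => hI⟩
    obtain ⟨hmod, hopt⟩ := ih.mp (argOn_subset hI)
    refine ⟨hmod, hI, fun b hb => ?_⟩
    rw [Finset.filter_lt_insert_of_le (has b hb).le]
    exact hopt b hb

lemma optimalI_iff_mem_chainI (W : EWSystem ι ε) (r : ℝ → ℝ → Prop) (I : ι) :
    W.OptimalI r I ↔ I ∈ W.chainI r (W.levels.sort (· ≤ ·)) :=
  (W.mem_chainI_sort_iff r W.levels I).symm

lemma chainI_sort_inter_levels (W : EWSystem ι ε) {r : ℝ → ℝ → Prop} (hr : ∀ a, r a a)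
    (G : Finset ℕ+) :
    W.chainI r ((G ∩ W.levels).sort (· ≤ ·)) = W.chainI r (G.sort (· ≤ ·)) := by
  induction G using Finset.induction_on_min with
  | empty => simp
  | insert a s has ih =>
    rw [Finset.sort_insert _ (fun b hb => (has b hb).le) fun h => lt_irrefl a (has a h)]
    by_cases ha : a ∈ W.levels
    · rw [Finset.insert_inter_of_mem ha, Finset.sort_insert _
        (fun b hb => (has b (Finset.mem_of_mem_inter_left hb)).le)
        fun h => lt_irrefl a (has a (Finset.mem_of_mem_inter_left h))]
      simp only [chainI, ih]
    · rw [Finset.insert_inter_of_notMem ha, ih]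
      show _ = argOn r (W.levelCostI a) _
      rw [levelCostI_eq_zero_of_notMem_levels ha]
      exact (argOn_const hr 0).symm

lemma chainI_sort_congr {W W' : EWSystem ι ε} (hH : W.H = W'.H) {r : ℝ → ℝ → Prop}
    {G : Finset ℕ+}
    (h : ∀ a ∈ G, argOn r (W.levelCostI a) (W.chainI r ((G.filter (a < ·)).sort (· ≤ ·))) =
      argOn r (W'.levelCostI a) (W.chainI r ((G.filter (a < ·)).sort (· ≤ ·)))) :
    W.chainI r (G.sort (· ≤ ·)) = W'.chainI r (G.sort (· ≤ ·)) := by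
  induction G using Finset.induction_on_min with
  | empty => simp [chainI, IsModel, hH]
  | insert a s has ih =>
    rw [Finset.sort_insert _ (fun b hb => (has b hb).le) fun h => lt_irrefl a (has a h)]
    have ha := h a (Finset.mem_insert_self a s)
    rw [Finset.filter_lt_insert_of_forall_lt has] at ha
    show argOn r (W.levelCostI a) (W.chainI r _) = argOn r (W'.levelCostI a) (W'.chainI r _)
    rw [ha, ih fun b hb => by
      simpa only [Finset.filter_lt_insert_of_le (has b hb).le] using
        h b (Finset.mem_insert_of_mem hb)]

noncomputable def removeConds (W : EWSystem ι ε) (S : Multiset (EWCond ι ε)) : EWSystem ι ε :=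
  ⟨W.H, W.Z - S⟩

lemma levels_removeConds_subset (W : EWSystem ι ε) (S : Multiset (EWCond ι ε)) :
    (W.removeConds S).levels ⊆ W.levels := by
  intro a ha
  simp only [levels, removeConds, Multiset.mem_toFinset, Multiset.mem_map] at ha ⊢
  obtain ⟨B, hB, rfl⟩ := ha
  exact ⟨B, Multiset.mem_of_le tsub_le_self hB, rfl⟩

section removeConds

variable {W : EWSystem ι ε} {S : Multiset (EWCond ι ε)} {l : ℕ+}

lemma levelCostI_eq_removeConds_add (hS : S ≤ W.Z) (a : ℕ+) (I : ι) :
    W.levelCostI a I = (W.removeConds S).levelCostI a I +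
      (S.map fun B => if B.lvl = a then B.costI I else 0).sum := by
  conv_lhs => rw [levelCostI, ← tsub_add_cancel_of_le hS, Multiset.map_add, Multiset.sum_add]
  rfl

lemma levelCostI_removeConds_of_ne (hS : S ≤ W.Z) (hl : ∀ B ∈ S, B.lvl = l) {a : ℕ+}
    (ha : a ≠ l) :
    (W.removeConds S).levelCostI a = W.levelCostI a := by
  funext I
  rw [levelCostI_eq_removeConds_add hS, Multiset.sum_eq_zero, add_zero]
  intro x hx
  obtain ⟨B, hB, rfl⟩ := Multiset.mem_map.mp hx
  exact if_neg fun h => ha (h.symm.trans (hl B hB))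

lemma levelCostI_eq_removeConds_add_of_eq (hS : S ≤ W.Z) (hl : ∀ B ∈ S, B.lvl = l) :
    W.levelCostI l = fun I => (W.removeConds S).levelCostI l I + (S.map (·.costI I)).sum := by
  funext I
  rw [levelCostI_eq_removeConds_add hS]
  congr 2
  exact Multiset.map_congr rfl fun B hB => if_pos (hl B hB)

end removeConds

lemma mem_chainI_levelsAbove {W : EWSystem ι ε} {r : ℝ → ℝ → Prop} {l : ℕ+} {I : ι}
    (hI : I ∈ W.chainI r (W.levelsAbove l)) :
    if h : (W.levels.filter (l < ·)).Nonempty then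
      W.LOptI r ((W.levels.filter (l < ·)).min' h) I else W.IsModel I := by
  obtain ⟨hmod, hopt⟩ := (W.mem_chainI_sort_iff r _ I).mp hI
  split_ifs with h
  · set m := (W.levels.filter (l < ·)).min' h
    have hlm : l < m := (Finset.mem_filter.mp (Finset.min'_mem _ h)).2
    have hfilter : (W.levels.filter (l < ·)).filter (m < ·) = W.levels.filter (m < ·) := by
      rw [Finset.filter_filter]
      exact Finset.filter_congr fun x _ => ⟨And.right, fun hx => ⟨hlm.trans hx, hx⟩⟩
    have := hopt m (Finset.min'_mem _ h)
    rwa [hfilter] at this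
  · exact hmod

end EWSystem

/-- if `S ⊆ Z` consists of ew-conditions all of level `l`, and any two
`succ(l)`-optimal (resp. `succ(l)`-min-optimal) models of `W` — or any two models of
`W` when `succ(l)` is undefined, i.e. `l` is the greatest level — have equal sums
`Σ_{B ∈ S} ⟦I ⊨ B⟧`, then `W` and `(H, Z \ S)` have the same optimal
(resp. min-optimal) models. -/
theorem stmt11 {ι ε : Type*} (W : EWSystem ι ε) (S : Multiset (EWCond ι ε))
    (hS : S ≤ W.Z) (l : ℕ+) (hl : ∀ B ∈ S, B.lvl = l)
    (r : ℝ → ℝ → Prop) (hr : r = EWSystem.maxR ∨ r = EWSystem.minR)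
    (heq : ∀ I I' : ι,
      (if h : (W.levels.filter (fun l' => l < l')).Nonempty then
        W.LOptI r ((W.levels.filter (fun l' => l < l')).min' h) I ∧
        W.LOptI r ((W.levels.filter (fun l' => l < l')).min' h) I'
      else W.IsModel I ∧ W.IsModel I') →
      (S.map (fun B => B.costI I)).sum = (S.map (fun B => B.costI I')).sum) :
    ∀ I : ι, W.OptimalI r I ↔ (EWSystem.mk W.H (W.Z - S)).OptimalI r I := by
  intro I
  have hr_refl : ∀ a, r a a := by rcases hr with rfl | rfl <;> exact le_refl
  have hr_add : ∀ a b c : ℝ, r (a + c) (b + c) ↔ r a b := by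
    rcases hr with rfl | rfl <;> intro a b c <;> simp [EWSystem.maxR, EWSystem.minR]
  have hconst : ∀ J ∈ W.chainI r (W.levelsAbove l), ∀ J' ∈ W.chainI r (W.levelsAbove l),
      (S.map (·.costI J)).sum = (S.map (·.costI J')).sum := fun J hJ J' hJ' => by
    have hJ := EWSystem.mem_chainI_levelsAbove hJ
    have hJ' := EWSystem.mem_chainI_levelsAbove hJ'
    exact heq J J' (by split_ifs at hJ hJ' ⊢ <;> exact ⟨hJ, hJ'⟩)
  have hsame : W.chainI r (W.levels.sort (· ≤ ·)) =
      (W.removeConds S).chainI r (W.levels.sort (· ≤ ·)) := by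
    refine EWSystem.chainI_sort_congr (W := W) (W' := W.removeConds S) rfl fun a _ => ?_
    by_cases ha : a = l
    · subst ha
      rw [EWSystem.levelCostI_eq_removeConds_add_of_eq hS hl]
      exact EWSystem.argOn_add_of_const hr_add hconst
    · rw [EWSystem.levelCostI_removeConds_of_ne hS hl ha]
  rw [W.optimalI_iff_mem_chainI, EWSystem.optimalI_iff_mem_chainI, hsame,
    ← (W.removeConds S).chainI_sort_inter_levels hr_refl W.levels,
    Finset.inter_eq_right.mpr (W.levels_removeConds_subset S)]
  rfl
end
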